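/- arXiv:2112.05799 — 3 statements merged into one kernel-verified Lean document; each statement's English description precedes it below -/
import Mathlib

section
/- The function u : ℝ → ℝ defined by u(x) = sin x + sin(πx) satisfies sup u = 2 and inf u = −2, but there is no x ∈ ℝ with u(x) = 2 and no x ∈ ℝ with u(x) = −2 (the supremum and infimum are not attained). -/
open Real

private lemma dense_aux :
    Dense ((AddSubgroup.closure {2 * π ^ 2, 2 * π} : AddSubgroup ℝ) : Set ℝ) := by
  rcases AddSubgroup.dense_or_cyclic (AddSubgroup.closure {2 * π ^ 2, 2 * π}) with h | ⟨a, ha⟩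
  · exact h
  · exfalso
    have h1 : (2 * π ^ 2 : ℝ) ∈ AddSubgroup.closure ({2 * π ^ 2, 2 * π} : Set ℝ) :=
      AddSubgroup.subset_closure (by simp)
    have h2 : (2 * π : ℝ) ∈ AddSubgroup.closure ({2 * π ^ 2, 2 * π} : Set ℝ) :=
      AddSubgroup.subset_closure (by simp)
    rw [ha, AddSubgroup.mem_closure_singleton] at h1 h2
    obtain ⟨k, hk⟩ := h1
    obtain ⟨n, hn⟩ := h2
    rw [zsmul_eq_mul] at hk hn
    have hpi := pi_pos
    have ha0 : a ≠ 0 := by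
      rintro rfl; rw [mul_zero] at hn; nlinarith
    have hn0 : (n : ℝ) ≠ 0 := by
      rintro h; rw [h, zero_mul] at hn; nlinarith
    have hkey : (k : ℝ) = π * n := by
      have h5 : (k : ℝ) * a = (π * n) * a := by rw [mul_assoc, hn, hk]; ring
      exact mul_right_cancel₀ ha0 h5
    exact irrational_pi ⟨(k : ℚ) / (n : ℚ), by
      push_cast
      rw [div_eq_iff hn0, hkey, mul_comm]⟩

/-- For every `ε > 0` there is `x` with `sin x = 1` and `sin (π x) > 1 - ε`. -/
private lemma exists_near_sup (ε : ℝ) (hε : 0 < ε) :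
    ∃ x : ℝ, Real.sin x = 1 ∧ Real.sin (π * x) > 1 - ε := by
  set t : ℝ := π / 2 - π ^ 2 / 2 with ht
  set δ : ℝ := min 1 ε with hδ
  have hδ0 : 0 < δ := lt_min one_pos hε
  have htc : t ∈ closure ((AddSubgroup.closure {2 * π ^ 2, 2 * π} : AddSubgroup ℝ) : Set ℝ) :=
    dense_aux t
  rw [Metric.mem_closure_iff] at htc
  obtain ⟨g, hg, hdist⟩ := htc δ hδ0
  rw [SetLike.mem_coe, AddSubgroup.mem_closure_pair] at hg
  obtain ⟨k, m, hkm⟩ := hg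
  rw [zsmul_eq_mul, zsmul_eq_mul] at hkm
  refine ⟨π / 2 + k * (2 * π), ?_, ?_⟩
  · rw [Real.sin_add_int_mul_two_pi, Real.sin_pi_div_two]
  · set d : ℝ := g - t with hd
    have hdd : |d| < δ := by
      rw [hd, abs_sub_comm]; simpa [Real.dist_eq] using hdist
    have harg : π * (π / 2 + k * (2 * π)) = (π / 2 + d) + (-m : ℤ) * (2 * π) := by
      rw [hd, ← hkm, ht]; push_cast; ring
    have hsin : Real.sin (π / 2 + d) = Real.cos d := by
      rw [Real.sin_add]; simp
    rw [harg, Real.sin_add_int_mul_two_pi, hsin]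
    have h1 : (1 : ℝ) - d ^ 2 / 2 ≤ Real.cos d := Real.one_sub_sq_div_two_le_cos
    have h2 : d ^ 2 < ε := by
      have h3 : |d| < 1 := lt_of_lt_of_le hdd (min_le_left _ _)
      have h4 : |d| < ε := lt_of_lt_of_le hdd (min_le_right _ _)
      calc d ^ 2 = |d| * |d| := by rw [sq, ← abs_mul_abs_self]
        _ ≤ 1 * |d| := by apply mul_le_mul_of_nonneg_right h3.le (abs_nonneg _)
        _ < ε := by rwa [one_mul]
    clear_value d t δ
    calc (1:ℝ) - ε < 1 - d ^ 2 / 2 := by nlinarith [sq_nonneg d]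
      _ ≤ Real.cos d := h1

/-- `u x = sin x + sin (π x)` has supremum `2` and infimum `-2`, neither of which is
attained. -/
theorem sin_add_sin_pi_sup_inf_not_attained :
    sSup (Set.range fun x : ℝ => Real.sin x + Real.sin (Real.pi * x)) = 2 ∧
    sInf (Set.range fun x : ℝ => Real.sin x + Real.sin (Real.pi * x)) = -2 ∧
    (¬ ∃ x : ℝ, Real.sin x + Real.sin (Real.pi * x) = 2) ∧
    (¬ ∃ x : ℝ, Real.sin x + Real.sin (Real.pi * x) = -2) := by
  set u : ℝ → ℝ := fun x => Real.sin x + Real.sin (π * x) with hu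
  have hub : ∀ x, u x ≤ 2 := fun x => by
    have := Real.sin_le_one x; have := Real.sin_le_one (π * x); simp only [hu]; linarith
  have hlb : ∀ x, -2 ≤ u x := fun x => by
    have := Real.neg_one_le_sin x; have := Real.neg_one_le_sin (π * x); simp only [hu]; linarith
  have hnear : ∀ w : ℝ, w < 2 → ∃ x, w < u x := by
    intro w hw
    obtain ⟨x, hx1, hx2⟩ := exists_near_sup (2 - w) (by linarith)
    exact ⟨x, by simp only [hu]; rw [hx1]; linarith⟩
  have hnear' : ∀ w : ℝ, -2 < w → ∃ x, u x < w := by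
    intro w hw
    obtain ⟨x, hx⟩ := hnear (-w) (by linarith)
    refine ⟨-x, ?_⟩
    have : u (-x) = -u x := by simp only [hu, mul_neg, Real.sin_neg]; ring
    rw [this]; linarith
  refine ⟨?_, ?_, ?_, ?_⟩
  · apply IsLUB.csSup_eq _ (Set.range_nonempty u)
    constructor
    · rintro y ⟨x, rfl⟩; exact hub x
    · intro b hb
      by_contra hb2
      push_neg at hb2
      obtain ⟨x, hx⟩ := hnear b hb2
      exact absurd (hb (Set.mem_range_self x)) (not_le.2 hx)
  · apply IsGLB.csInf_eq _ (Set.range_nonempty u)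
    constructor
    · rintro y ⟨x, rfl⟩; exact hlb x
    · intro b hb
      by_contra hb2
      push_neg at hb2
      obtain ⟨x, hx⟩ := hnear' b hb2
      exact absurd (hb (Set.mem_range_self x)) (not_le.2 hx)
  · rintro ⟨x, hx⟩
    have hs1 : Real.sin x = 1 := by
      have := Real.sin_le_one x; have := Real.sin_le_one (π * x); linarith
    have hs2 : Real.sin (π * x) = 1 := by
      have := Real.sin_le_one x; have := Real.sin_le_one (π * x); linarith
    rw [Real.sin_eq_one_iff] at hs1 hs2
    obtain ⟨k, hk⟩ := hs1
    obtain ⟨n, hn⟩ := hs2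
    have hx2 : x = 1 / 2 + n * 2 := by
      have hpi := pi_pos
      have : π * (1 / 2 + n * 2) = π * x := by rw [← hn]; ring
      have := mul_left_cancel₀ (ne_of_gt hpi) this
      linarith
    have hk0 : (1 / 2 + (k : ℝ) * 2) ≠ 0 := by
      intro h
      have h6 : ((4 * k : ℤ) : ℝ) = ((-1 : ℤ) : ℝ) := by push_cast; linarith
      have := Int.cast_injective h6
      omega
    have hkey : π * (1 / 2 + k * 2) = 1 / 2 + n * 2 := by
      rw [← hx2, ← hk]; ring
    exact irrational_pi ⟨(1 / 2 + (n : ℚ) * 2) / (1 / 2 + (k : ℚ) * 2), by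
      push_cast
      rw [div_eq_iff hk0, ← hkey, mul_comm]⟩
  · rintro ⟨x, hx⟩
    have hs1 : Real.sin x = -1 := by
      have := Real.neg_one_le_sin x; have := Real.neg_one_le_sin (π * x); linarith
    have hs2 : Real.sin (π * x) = -1 := by
      have := Real.neg_one_le_sin x; have := Real.neg_one_le_sin (π * x); linarith
    rw [Real.sin_eq_neg_one_iff] at hs1 hs2
    obtain ⟨k, hk⟩ := hs1
    obtain ⟨n, hn⟩ := hs2
    have hx2 : x = -(1 / 2) + n * 2 := by
      have hpi := pi_pos
      have : π * (-(1 / 2) + n * 2) = π * x := by rw [← hn]; ring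
      have := mul_left_cancel₀ (ne_of_gt hpi) this
      linarith
    have hk0 : (-(1 / 2) + (k : ℝ) * 2) ≠ 0 := by
      intro h
      have h6 : ((4 * k : ℤ) : ℝ) = ((1 : ℤ) : ℝ) := by push_cast; linarith
      have := Int.cast_injective h6
      omega
    have hkey : π * (-(1 / 2) + k * 2) = -(1 / 2) + n * 2 := by
      rw [← hx2, ← hk]; ring
    exact irrational_pi ⟨(-(1 / 2) + (n : ℚ) * 2) / (-(1 / 2) + (k : ℚ) * 2), by
      push_cast
      rw [div_eq_iff hk0, ← hkey, mul_comm]⟩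
end

section
/- For any x ∈ ℝ, it is impossible that sin x = 1 and sin(πx) = 1 simultaneously. -/
/-- No real number satisfies `sin x = 1` and `sin (π x) = 1` simultaneously. -/
theorem not_sin_eq_one_and_sin_pi_mul_eq_one (x : ℝ) :
    ¬ (Real.sin x = 1 ∧ Real.sin (Real.pi * x) = 1) := by
  rintro ⟨h1, h2⟩
  obtain ⟨n, hn⟩ := Real.sin_eq_one_iff.mp h1
  obtain ⟨m, hm⟩ := Real.sin_eq_one_iff.mp h2
  have hpi := Real.pi_ne_zero
  have h3 : Real.pi * x = Real.pi * (1 / 2 + 2 * (m : ℝ)) := by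
    rw [← hm]; ring
  have hx : x = 1 / 2 + 2 * (m : ℝ) := mul_left_cancel₀ hpi h3
  have hkey : Real.pi * (1 / 2 + 2 * (n : ℝ)) = 1 / 2 + 2 * (m : ℝ) := by
    rw [← hx, ← hn]; ring
  have hne' : ((1 : ℝ) + 4 * n) ≠ 0 := by
    intro h
    have : (1 + 4 * n : ℤ) = 0 := by exact_mod_cast h
    omega
  have hq : ((1 + 4 * m : ℚ) / (1 + 4 * n : ℚ) : ℝ) = Real.pi := by
    push_cast
    rw [div_eq_iff hne']
    nlinarith [hkey]
  exact irrational_pi ⟨(1 + 4 * m) / (1 + 4 * n), by exact_mod_cast hq⟩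
end

section
/- Signature equivalence is an equivalence relation: for smooth maps u₁ : M₁ → N and u₂ : M₂ → N, say u₁ ~ u₂ if there exist a space C, a continuous U : C → N, and continuous surjections φ₁ : M₁ → C, φ₂ : M₂ → C with u₁ = U ∘ φ₁ and u₂ = U ∘ φ₂. Then ~ is reflexive, symmetric, and transitive (in the topological category, where transitivity is witnessed by an appropriate quotient/pushout construction). -/
/-! Transitivity glues the two phase spaces along the common middle domain: the phase spaces
`P ← M₂ → Q` are replaced by their pushout, which receives continuous maps from `P` and `Q`
agreeing on `M₂`, hence a common factorisation of `u₁` and `u₃`. Each leg of the pushout is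
surjective because the opposite leg of the span is. -/

universe u

/-- Two continuous maps into `N` (with possibly different domains) are signature
equivalent if they factor through a common phase space `C` via continuous surjections. -/
def SigEquiv {N : Type u} [TopologicalSpace N]
    (A B : Σ M : TopCat.{u}, C(M, N)) : Prop :=
  ∃ (C : TopCat.{u}) (U : C(C, N)) (φ₁ : C(A.1, C)) (φ₂ : C(B.1, C)),
    Function.Surjective φ₁ ∧ Function.Surjective φ₂ ∧
    (∀ x, A.2 x = U (φ₁ x)) ∧ (∀ x, B.2 x = U (φ₂ x))

section Gluing

variable {X Y Z : Type*} (f : Z → X) (g : Z → Y)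

/-- The relation whose quotient `Quot (GlueRel f g)` is the pushout of `f` and `g`. -/
def GlueRel (a b : X ⊕ Y) : Prop :=
  ∃ z, a = .inl (f z) ∧ b = .inr (g z)

theorem glue_inl_eq_inr (z : Z) :
    Quot.mk (GlueRel f g) (.inl (f z)) = Quot.mk (GlueRel f g) (.inr (g z)) :=
  Quot.sound ⟨z, rfl, rfl⟩

variable {f g}

theorem surjective_glue_inl (hg : Function.Surjective g) :
    Function.Surjective fun x => Quot.mk (GlueRel f g) (.inl x) := by
  rintro ⟨x | y⟩
  · exact ⟨x, rfl⟩
  · obtain ⟨z, rfl⟩ := hg y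
    exact ⟨f z, glue_inl_eq_inr f g z⟩

theorem surjective_glue_inr (hf : Function.Surjective f) :
    Function.Surjective fun y => Quot.mk (GlueRel f g) (.inr y) := by
  rintro ⟨x | y⟩
  · obtain ⟨z, rfl⟩ := hf x
    exact ⟨g z, (glue_inl_eq_inr f g z).symm⟩
  · exact ⟨y, rfl⟩

variable [TopologicalSpace X] [TopologicalSpace Y]

variable (f g) in
def glueInl : C(X, Quot (GlueRel f g)) :=
  ⟨fun x => Quot.mk _ (.inl x), continuous_quot_mk.comp continuous_inl⟩

variable (f g) in
def glueInr : C(Y, Quot (GlueRel f g)) :=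
  ⟨fun y => Quot.mk _ (.inr y), continuous_quot_mk.comp continuous_inr⟩

variable {W : Type*} [TopologicalSpace W]

theorem sumElim_eq_of_glueRel {u : C(X, W)} {v : C(Y, W)} (huv : ∀ z, u (f z) = v (g z))
    {a b : X ⊕ Y} (hab : GlueRel f g a b) : Sum.elim u v a = Sum.elim u v b := by
  obtain ⟨z, rfl, rfl⟩ := hab
  exact huv z

def glueDesc (u : C(X, W)) (v : C(Y, W)) (huv : ∀ z, u (f z) = v (g z)) :
    C(Quot (GlueRel f g), W) :=
  ⟨Quot.lift (Sum.elim u v) fun _ _ => sumElim_eq_of_glueRel huv,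
    continuous_quot_lift _ (u.continuous.sumElim v.continuous)⟩

end Gluing

namespace SigEquiv

variable {N : Type u} [TopologicalSpace N]

theorem refl (A : Σ M : TopCat.{u}, C(M, N)) : SigEquiv A A :=
  ⟨A.1, A.2, .id _, .id _, Function.surjective_id, Function.surjective_id,
    fun _ => rfl, fun _ => rfl⟩

theorem symm {A B : Σ M : TopCat.{u}, C(M, N)} : SigEquiv A B → SigEquiv B A
  | ⟨C, U, φ₁, φ₂, hφ₁, hφ₂, hU₁, hU₂⟩ => ⟨C, U, φ₂, φ₁, hφ₂, hφ₁, hU₂, hU₁⟩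

theorem trans {A B C : Σ M : TopCat.{u}, C(M, N)} (hAB : SigEquiv A B) (hBC : SigEquiv B C) :
    SigEquiv A C := by
  obtain ⟨P, U, φ₁, φ₂, hφ₁, hφ₂, hU₁, hU₂⟩ := hAB
  obtain ⟨Q, V, ψ₂, ψ₃, hψ₂, hψ₃, hV₂, hV₃⟩ := hBC
  have hUV : ∀ x, U (φ₂ x) = V (ψ₂ x) := fun x => (hU₂ x).symm.trans (hV₂ x)
  exact ⟨TopCat.of (Quot (GlueRel φ₂ ψ₂)), glueDesc U V hUV,
    (glueInl φ₂ ψ₂).comp φ₁, (glueInr φ₂ ψ₂).comp ψ₃,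
    (surjective_glue_inl hψ₂).comp hφ₁, (surjective_glue_inr hφ₂).comp hψ₃, hU₁, hV₃⟩

end SigEquiv

/-- Signature equivalence is an equivalence relation (reflexive, symmetric and
transitive). -/
theorem sigEquiv_equivalence {N : Type u} [TopologicalSpace N] :
    Equivalence (@SigEquiv N _) :=
  ⟨SigEquiv.refl, SigEquiv.symm, SigEquiv.trans⟩
end
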